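/- arXiv:2404.07007 — 2 statements merged into one kernel-verified Lean document; each statement's English description precedes it below -/
import Mathlib

section
/- The interaction strengths stay uniformly positive along the solution: for all t ≥ 0 one has ψ(x_i(t), x_j(t)) ≥ ψ_0 > 0 for all i, j = 1,…,N, ψ*(y_l(t), y_r(t)) ≥ ψ*_0 > 0 for all l, r = 1,…,M, φ(x_i(t), y_j(t−τ)) ≥ φ_0 > 0 for all i = 1,…,k, j = 1,…,h, and φ*(y_l(t), x_r(t−τ)) ≥ φ*_0 > 0 for all l = 1,…,h, r = 1,…,k, where ψ_0 := min_{|z_1|,|z_2| ≤ C_0} ψ(z_1, z_2), and ψ*_0, φ_0, φ*_0 are defined analogously. -/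
open Real Set Filter Topology
open scoped BigOperators RealInnerProductSpace

noncomputable section

/-- `Λ` : the maximum of the sup-norms of the four (positive) influence functions. -/
def Lam {d : ℕ} (ψ ψs φ φs : EuclideanSpace ℝ (Fin d) → EuclideanSpace ℝ (Fin d) → ℝ) : ℝ :=
  max
    (max (⨆ p : EuclideanSpace ℝ (Fin d) × EuclideanSpace ℝ (Fin d), ψ p.1 p.2)
         (⨆ p : EuclideanSpace ℝ (Fin d) × EuclideanSpace ℝ (Fin d), ψs p.1 p.2))
    (max (⨆ p : EuclideanSpace ℝ (Fin d) × EuclideanSpace ℝ (Fin d), φ p.1 p.2)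
         (⨆ p : EuclideanSpace ℝ (Fin d) × EuclideanSpace ℝ (Fin d), φs p.1 p.2))

/-- An influence function is admissible when it is continuous, positive and bounded. -/
def Admissible {d : ℕ} (f : EuclideanSpace ℝ (Fin d) → EuclideanSpace ℝ (Fin d) → ℝ) : Prop :=
  Continuous (fun p : EuclideanSpace ℝ (Fin d) × EuclideanSpace ℝ (Fin d) => f p.1 p.2) ∧
    (∀ z₁ z₂, 0 < f z₁ z₂) ∧
    BddAbove (Set.range fun p : EuclideanSpace ℝ (Fin d) × EuclideanSpace ℝ (Fin d) => f p.1 p.2)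

/-- `(x, y)` is a global classical solution of the two-population delayed
Hegselmann–Krause system, with `k` (resp. `h`) leaders in the first (resp. second)
population and time delay `τ`. -/
structure IsSol {d N M : ℕ} (h k : ℕ) (τ : ℝ)
    (ψ ψs φ φs : EuclideanSpace ℝ (Fin d) → EuclideanSpace ℝ (Fin d) → ℝ)
    (x : Fin N → ℝ → EuclideanSpace ℝ (Fin d))
    (y : Fin M → ℝ → EuclideanSpace ℝ (Fin d)) : Prop where
  contx : ∀ i, Continuous (x i)
  conty : ∀ j, Continuous (y j)
  odex_lead : ∀ i : Fin N, (i : ℕ) < k → ∀ t : ℝ, 0 < t →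
    HasDerivAt (x i)
      ((∑ j ∈ Finset.univ.erase i,
          (ψ (x i t) (x j t) / ((N : ℝ) + h - 1)) • (x j t - x i t)) +
        ∑ j ∈ Finset.univ.filter (fun j : Fin M => (j : ℕ) < h),
          (φ (x i t) (y j (t - τ)) / ((N : ℝ) + h - 1)) • (y j (t - τ) - x i t)) t
  odex_foll : ∀ i : Fin N, k ≤ (i : ℕ) → ∀ t : ℝ, 0 < t →
    HasDerivAt (x i)
      (∑ j ∈ Finset.univ.erase i,
          (ψ (x i t) (x j t) / ((N : ℝ) - 1)) • (x j t - x i t)) t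
  odey_lead : ∀ i : Fin M, (i : ℕ) < h → ∀ t : ℝ, 0 < t →
    HasDerivAt (y i)
      ((∑ j ∈ Finset.univ.erase i,
          (ψs (y i t) (y j t) / ((M : ℝ) + k - 1)) • (y j t - y i t)) +
        ∑ j ∈ Finset.univ.filter (fun j : Fin N => (j : ℕ) < k),
          (φs (y i t) (x j (t - τ)) / ((M : ℝ) + k - 1)) • (x j (t - τ) - y i t)) t
  odey_foll : ∀ i : Fin M, h ≤ (i : ℕ) → ∀ t : ℝ, 0 < t →
    HasDerivAt (y i)
      (∑ j ∈ Finset.univ.erase i,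
          (ψs (y i t) (y j t) / ((M : ℝ) - 1)) • (y j t - y i t)) t

/-- `m_0` : the minimum of the projections on `v` of the initial data. -/
def mInit {d N M : ℕ} (h k : ℕ) (τ : ℝ) (v : EuclideanSpace ℝ (Fin d))
    (x : Fin N → ℝ → EuclideanSpace ℝ (Fin d))
    (y : Fin M → ℝ → EuclideanSpace ℝ (Fin d)) : ℝ :=
  min
    (min (⨅ p : {i : Fin N // (i : ℕ) < k} × (Icc (-τ) (0 : ℝ)), ⟪x p.1.1 (p.2 : ℝ), v⟫)
         (⨅ i : {i : Fin N // k ≤ (i : ℕ)}, ⟪x i.1 0, v⟫))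
    (min (⨅ p : {j : Fin M // (j : ℕ) < h} × (Icc (-τ) (0 : ℝ)), ⟪y p.1.1 (p.2 : ℝ), v⟫)
         (⨅ j : {j : Fin M // h ≤ (j : ℕ)}, ⟪y j.1 0, v⟫))

/-- `M_0` : the maximum of the projections on `v` of the initial data. -/
def MInit {d N M : ℕ} (h k : ℕ) (τ : ℝ) (v : EuclideanSpace ℝ (Fin d))
    (x : Fin N → ℝ → EuclideanSpace ℝ (Fin d))
    (y : Fin M → ℝ → EuclideanSpace ℝ (Fin d)) : ℝ :=
  max
    (max (⨆ p : {i : Fin N // (i : ℕ) < k} × (Icc (-τ) (0 : ℝ)), ⟪x p.1.1 (p.2 : ℝ), v⟫)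
         (⨆ i : {i : Fin N // k ≤ (i : ℕ)}, ⟪x i.1 0, v⟫))
    (max (⨆ p : {j : Fin M // (j : ℕ) < h} × (Icc (-τ) (0 : ℝ)), ⟪y p.1.1 (p.2 : ℝ), v⟫)
         (⨆ j : {j : Fin M // h ≤ (j : ℕ)}, ⟪y j.1 0, v⟫))

/-- `C_0` : the maximum of the norms of the initial data. -/
def Cinit {d N M : ℕ} (h k : ℕ) (τ : ℝ)
    (x : Fin N → ℝ → EuclideanSpace ℝ (Fin d))
    (y : Fin M → ℝ → EuclideanSpace ℝ (Fin d)) : ℝ :=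
  max
    (max (⨆ p : {i : Fin N // (i : ℕ) < k} × (Icc (-τ) (0 : ℝ)), ‖x p.1.1 (p.2 : ℝ)‖)
         (⨆ i : {i : Fin N // k ≤ (i : ℕ)}, ‖x i.1 0‖))
    (max (⨆ p : {j : Fin M // (j : ℕ) < h} × (Icc (-τ) (0 : ℝ)), ‖y p.1.1 (p.2 : ℝ)‖)
         (⨆ j : {j : Fin M // h ≤ (j : ℕ)}, ‖y j.1 0‖))

/-- the minimum of an influence function on the ball of radius `C` (in each variable). -/
def minOnBall {d : ℕ} (C : ℝ)
    (f : EuclideanSpace ℝ (Fin d) → EuclideanSpace ℝ (Fin d) → ℝ) : ℝ :=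
  ⨅ p : {z : EuclideanSpace ℝ (Fin d) × EuclideanSpace ℝ (Fin d) // ‖z.1‖ ≤ C ∧ ‖z.2‖ ≤ C},
    f p.1.1 p.1.2

/-- `Γ := min {ψ₀, ψ*₀, φ₀, φ*₀}`. -/
def Gam {d N M : ℕ} (h k : ℕ) (τ : ℝ)
    (ψ ψs φ φs : EuclideanSpace ℝ (Fin d) → EuclideanSpace ℝ (Fin d) → ℝ)
    (x : Fin N → ℝ → EuclideanSpace ℝ (Fin d))
    (y : Fin M → ℝ → EuclideanSpace ℝ (Fin d)) : ℝ :=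
  min (min (minOnBall (Cinit h k τ x y) ψ) (minOnBall (Cinit h k τ x y) ψs))
      (min (minOnBall (Cinit h k τ x y) φ) (minOnBall (Cinit h k τ x y) φs))

/-- `m_n` : minimum of the projections on `v` over the time mesh `I_n = [(6n-1)τ, 6nτ]`. -/
def mSeq {d N M : ℕ} (h k : ℕ) (τ : ℝ) (v : EuclideanSpace ℝ (Fin d))
    (x : Fin N → ℝ → EuclideanSpace ℝ (Fin d))
    (y : Fin M → ℝ → EuclideanSpace ℝ (Fin d)) (n : ℕ) : ℝ :=
  min
    (min (⨅ p : {i : Fin N // (i : ℕ) < k} × (Icc ((6 * (n : ℝ) - 1) * τ) (6 * (n : ℝ) * τ)),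
            ⟪x p.1.1 (p.2 : ℝ), v⟫)
         (⨅ i : {i : Fin N // k ≤ (i : ℕ)}, ⟪x i.1 (6 * (n : ℝ) * τ), v⟫))
    (min (⨅ p : {j : Fin M // (j : ℕ) < h} × (Icc ((6 * (n : ℝ) - 1) * τ) (6 * (n : ℝ) * τ)),
            ⟪y p.1.1 (p.2 : ℝ), v⟫)
         (⨅ j : {j : Fin M // h ≤ (j : ℕ)}, ⟪y j.1 (6 * (n : ℝ) * τ), v⟫))

/-- `M_n` : maximum of the projections on `v` over the time mesh `I_n = [(6n-1)τ, 6nτ]`. -/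
def MSeq {d N M : ℕ} (h k : ℕ) (τ : ℝ) (v : EuclideanSpace ℝ (Fin d))
    (x : Fin N → ℝ → EuclideanSpace ℝ (Fin d))
    (y : Fin M → ℝ → EuclideanSpace ℝ (Fin d)) (n : ℕ) : ℝ :=
  max
    (max (⨆ p : {i : Fin N // (i : ℕ) < k} × (Icc ((6 * (n : ℝ) - 1) * τ) (6 * (n : ℝ) * τ)),
            ⟪x p.1.1 (p.2 : ℝ), v⟫)
         (⨆ i : {i : Fin N // k ≤ (i : ℕ)}, ⟪x i.1 (6 * (n : ℝ) * τ), v⟫))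
    (max (⨆ p : {j : Fin M // (j : ℕ) < h} × (Icc ((6 * (n : ℝ) - 1) * τ) (6 * (n : ℝ) * τ)),
            ⟪y p.1.1 (p.2 : ℝ), v⟫)
         (⨆ j : {j : Fin M // h ≤ (j : ℕ)}, ⟪y j.1 (6 * (n : ℝ) * τ), v⟫))


/-!
Every agent stays in the closed ball of radius `C₀` for all `t ≥ 0`; the lower bounds then hold
because a continuous positive function has a positive minimum on the compact set
`‖z₁‖, ‖z₂‖ ≤ C₀`. The ball is invariant by the method of steps: on `[T, T + τ]` the delayed
positions are already known to lie in it, and for an agent `z` farthest from the origin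
`d/dt ‖z‖² = 2 ⟪z, z'⟫ ≤ 0`, because every term `c • (w - z)` of the velocity has `c ≥ 0` and
`‖w‖ ≤ ‖z‖`. A maximum principle for finitely many functions, proved with a linear barrier and
the Dini derivative of their pointwise maximum, turns this into the bound.
-/
theorem inner_sum_smul_sub_nonpos {E ι : Type*} [NormedAddCommGroup E] [InnerProductSpace ℝ E]
    (s : Finset ι) {c : ι → ℝ} {w : ι → E} {z : E} (hc : ∀ j ∈ s, 0 ≤ c j)
    (hw : ∀ j ∈ s, ‖w j‖ ≤ ‖z‖) : ⟪z, ∑ j ∈ s, c j • (w j - z)⟫ ≤ 0 := by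
  rw [inner_sum]
  refine Finset.sum_nonpos fun j hj => ?_
  rw [inner_smul_right, inner_sub_right, real_inner_self_eq_norm_mul_norm]
  refine mul_nonpos_of_nonneg_of_nonpos (hc j hj) (sub_nonpos.2 ?_)
  calc ⟪z, w j⟫ ≤ ‖z‖ * ‖w j‖ := real_inner_le_norm z (w j)
    _ ≤ ‖z‖ * ‖z‖ := mul_le_mul_of_nonneg_left (hw j hj) (norm_nonneg z)

theorem eventually_slope_sup'_lt {ι : Type*} [Fintype ι] [Nonempty ι] {f : ι → ℝ → ℝ} {x r : ℝ}
    (hf : ∀ i, DifferentiableAt ℝ (f i) x)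
    (hr : ∀ i, (∀ j, f j x ≤ f i x) → deriv (f i) x < r) :
    ∀ᶠ z in 𝓝[>] x, slope (fun s => Finset.univ.sup' Finset.univ_nonempty (f · s)) x z < r := by
  set g := fun s => Finset.univ.sup' Finset.univ_nonempty (f · s)
  have hfg : ∀ i s, f i s ≤ g s := fun i s => Finset.le_sup' (f · s) (Finset.mem_univ i)
  have below : ∀ i, ∀ᶠ z in 𝓝[>] x, f i z < g x + r * (z - x) := by
    intro i
    rcases (hfg i x).lt_or_eq with hlt | heq
    · have hcont : ContinuousAt (fun z => f i z - r * (z - x)) x := by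
        have := (hf i).continuousAt; fun_prop
      have hlim : Tendsto (fun z => f i z - r * (z - x)) (𝓝[>] x) (𝓝 (f i x)) := by
        simpa using hcont.tendsto.mono_left nhdsWithin_le_nhds
      filter_upwards [hlim.eventually_lt_const hlt] with z hz
      linarith
    · have hslope : Tendsto (slope (f i) x) (𝓝[>] x) (𝓝 (deriv (f i) x)) :=
        (hasDerivAt_iff_tendsto_slope.1 (hf i).hasDerivAt).mono_left
          (nhdsWithin_mono _ fun z hz => ne_of_gt hz)
      have hdi : deriv (f i) x < r := hr i fun j => heq ▸ hfg j x
      filter_upwards [hslope.eventually_lt_const hdi, self_mem_nhdsWithin] with z hz hxz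
      rw [slope_def_field, div_lt_iff₀ (sub_pos.2 hxz)] at hz
      linarith
  filter_upwards [eventually_all.2 below, self_mem_nhdsWithin] with z hz hxz
  obtain ⟨j, -, hj⟩ := Finset.exists_mem_eq_sup' Finset.univ_nonempty (f · z)
  have hgz : g z = f j z := hj
  rw [slope_def_field, div_lt_iff₀ (sub_pos.2 hxz), hgz]
  linarith [hz j]

theorem le_of_deriv_nonpos_at_max {ι : Type*} [Finite ι] {f : ι → ℝ → ℝ} {a b C : ℝ}
    (hcont : ∀ i, ContinuousOn (f i) (Icc a b))
    (hdiff : ∀ i, ∀ t ∈ Ioo a b, DifferentiableAt ℝ (f i) t)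
    (ha : ∀ i, f i a ≤ C)
    (hmax : ∀ t ∈ Ioo a b, ∀ i, C < f i t → (∀ j, f j t ≤ f i t) → deriv (f i) t ≤ 0) :
    ∀ t ∈ Icc a b, ∀ i, f i t ≤ C := by
  intro t ht i
  rcases ht.1.eq_or_lt with rfl | hat
  · exact ha i
  cases nonempty_fintype ι
  have : Nonempty ι := ⟨i⟩
  set g := fun s => Finset.univ.sup' Finset.univ_nonempty (f · s)
  have hfg : ∀ i s, f i s ≤ g s := fun i s => Finset.le_sup' (f · s) (Finset.mem_univ i)
  have hargmax : ∀ s, (Finset.univ.filter fun i => ∀ j, f j s ≤ f i s).Nonempty := fun s =>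
    let ⟨i, hi⟩ := Finite.exists_max (f · s)
    ⟨i, Finset.mem_filter.2 ⟨Finset.mem_univ i, hi⟩⟩
  -- the largest derivative among the maximising indices bounds the Dini derivative of `g`
  set g' := fun s => (Finset.univ.filter fun i => ∀ j, f j s ≤ f i s).sup' (hargmax s)
    (fun i => deriv (f i) s)
  refine le_of_forall_pos_le_add fun ε hε => ?_
  set δ := ε / (2 * (t - a))
  have hδ : 0 < δ := div_pos hε (by linarith)
  -- no derivative is assumed at `a`, so the barrier starts at a nearby `a' > a`
  obtain ⟨a', ha', haa', ha't⟩ : ∃ a', (∀ i, f i a' < C + ε / 2) ∧ a' ∈ Ioo a t := by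
    have hnear : ∀ i, ∀ᶠ s in 𝓝[>] a, f i s < C + ε / 2 := fun i =>
      (((hcont i a ⟨le_rfl, ht.2.trans' hat.le⟩).mono_of_mem_nhdsWithin
        (Icc_mem_nhdsGT (hat.trans_le ht.2))).tendsto.eventually_lt_const (by linarith [ha i]))
    exact ((eventually_all.2 hnear).and (Ioo_mem_nhdsGT hat)).exists
  have hsub : Icc a' t ⊆ Icc a b := Icc_subset_Icc haa'.le ht.2
  have hbarrier : ∀ s ∈ Icc a' t, g s ≤ C + ε / 2 + δ * (s - a') := by
    refine image_le_of_liminf_slope_right_lt_deriv_boundary (f' := g') (B' := fun _ => δ) ?_ ?_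
      ?_ (fun s => ((hasDerivAt_id s).sub_const a' |>.const_mul δ).const_add _ |>.congr_deriv
        (mul_one δ)) ?_
    · exact ContinuousOn.finset_sup'_apply Finset.univ_nonempty fun i _ => (hcont i).mono hsub
    · intro s hs r hr
      refine (eventually_slope_sup'_lt (fun i => hdiff i s ⟨?_, ?_⟩) fun i hi => ?_).frequently
      · linarith [hs.1]
      · linarith [hs.2, ht.2]
      · exact (Finset.le_sup' (fun i => deriv (f i) s)
          (Finset.mem_filter.2 ⟨Finset.mem_univ i, hi⟩)).trans_lt hr
    · obtain ⟨j, -, hj⟩ := Finset.exists_mem_eq_sup' Finset.univ_nonempty (f · a')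
      simp only [g, hj, sub_self, mul_zero, add_zero]
      exact (ha' j).le
    · intro s hs hgs
      refine (Finset.sup'_lt_iff _).2 fun j hj => ?_
      have hjmax := (Finset.mem_filter.1 hj).2
      have hgj : g s = f j s := le_antisymm (Finset.sup'_le _ _ fun l _ => hjmax l) (hfg j s)
      refine (hmax s ⟨haa'.trans_le hs.1, hs.2.trans_le ht.2⟩ j ?_ hjmax).trans_lt hδ
      nlinarith [hs.1, hgj, hgs]
  have := hbarrier t ⟨ha't.le, le_rfl⟩
  calc f i t ≤ g t := hfg i t
    _ ≤ C + ε / 2 + δ * (t - a') := this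
    _ ≤ C + ε / 2 + δ * (t - a) := by gcongr
    _ = C + ε := by simp only [δ]; field_simp; ring

theorem forall_nonneg_of_forall_Icc_step {τ : ℝ} (hτ : 0 < τ) {Q : ℝ → Prop} (h0 : Q 0)
    (hstep : ∀ T, 0 ≤ T → (∀ s ∈ Icc 0 T, Q s) → ∀ s ∈ Icc T (T + τ), Q s) :
    ∀ t, 0 ≤ t → Q t := by
  have hn : ∀ n : ℕ, ∀ s ∈ Icc 0 (n * τ), Q s := by
    intro n
    induction n with
    | zero =>
      intro s hs
      rw [Nat.cast_zero, zero_mul, Icc_self, mem_singleton_iff] at hs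
      rwa [hs]
    | succ n ih =>
      intro s hs
      rcases le_or_gt s (n * τ) with hsn | hsn
      · exact ih s ⟨hs.1, hsn⟩
      · exact hstep _ (by positivity) ih s ⟨hsn.le, by push_cast at hs; linarith [hs.2]⟩
  intro t ht
  obtain ⟨n, hn'⟩ := exists_nat_ge (t / τ)
  exact hn n t ⟨ht, (div_le_iff₀ hτ).1 hn'⟩

theorem minOnBall_pos {d : ℕ} {C : ℝ} (hC : 0 ≤ C)
    {f : EuclideanSpace ℝ (Fin d) → EuclideanSpace ℝ (Fin d) → ℝ}
    (hcont : Continuous fun p : EuclideanSpace ℝ (Fin d) × EuclideanSpace ℝ (Fin d) => f p.1 p.2)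
    (hpos : ∀ z w, 0 < f z w) :
    0 < minOnBall C f := by
  have hK : {z : EuclideanSpace ℝ (Fin d) × EuclideanSpace ℝ (Fin d) | ‖z.1‖ ≤ C ∧ ‖z.2‖ ≤ C} =
      Metric.closedBall 0 C ×ˢ Metric.closedBall 0 C := by
    ext z; simp
  have hKc := hK ▸ (isCompact_closedBall 0 C).prod (isCompact_closedBall 0 C)
  obtain ⟨z₀, -, hz₀⟩ := hKc.exists_isMinOn ⟨(0, 0), by simp [hC]⟩ hcont.continuousOn
  have : Nonempty {z : EuclideanSpace ℝ (Fin d) × EuclideanSpace ℝ (Fin d) //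
      ‖z.1‖ ≤ C ∧ ‖z.2‖ ≤ C} := ⟨⟨(0, 0), by simp [hC]⟩⟩
  exact (hpos _ _).trans_le (le_ciInf fun p => hz₀ p.2)

theorem minOnBall_le {d : ℕ} {C : ℝ} {f : EuclideanSpace ℝ (Fin d) → EuclideanSpace ℝ (Fin d) → ℝ}
    (hf : ∀ z w, 0 ≤ f z w) {z w : EuclideanSpace ℝ (Fin d)} (hz : ‖z‖ ≤ C) (hw : ‖w‖ ≤ C) :
    minOnBall C f ≤ f z w := by
  refine ciInf_le ⟨0, ?_⟩ (⟨(z, w), hz, hw⟩ :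
    {p : EuclideanSpace ℝ (Fin d) × EuclideanSpace ℝ (Fin d) // ‖p.1‖ ≤ C ∧ ‖p.2‖ ≤ C})
  rintro _ ⟨p, rfl⟩
  exact hf _ _

section HegselmannKrause

variable {d N M h k : ℕ} {τ : ℝ}
  {ψ ψs φ φs : EuclideanSpace ℝ (Fin d) → EuclideanSpace ℝ (Fin d) → ℝ}
  {x : Fin N → ℝ → EuclideanSpace ℝ (Fin d)} {y : Fin M → ℝ → EuclideanSpace ℝ (Fin d)}

theorem IsSol.swap (hsol : IsSol h k τ ψ ψs φ φs x y) : IsSol k h τ ψs ψ φs φ y x :=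
  ⟨hsol.conty, hsol.contx, hsol.odey_lead, hsol.odey_foll, hsol.odex_lead, hsol.odex_foll⟩

theorem Cinit_swap : Cinit k h τ y x = Cinit h k τ x y := max_comm _ _

theorem Cinit_nonneg : 0 ≤ Cinit h k τ x y :=
  le_max_of_le_left (le_max_of_le_right (Real.iSup_nonneg fun _ => norm_nonneg _))

theorem norm_le_Cinit_of_lt (hx : ∀ i, Continuous (x i)) {i : Fin N} (hi : (i : ℕ) < k)
    {s : ℝ} (hs : s ∈ Icc (-τ) 0) : ‖x i s‖ ≤ Cinit h k τ x y := by
  have hcont : Continuous fun p : {i : Fin N // (i : ℕ) < k} × Icc (-τ) (0 : ℝ) =>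
      ‖x p.1.1 (p.2 : ℝ)‖ :=
    continuous_prod_of_discrete_left.2 fun i => ((hx i.1).comp continuous_subtype_val).norm
  exact (le_ciSup (isCompact_range hcont).bddAbove (⟨⟨i, hi⟩, ⟨s, hs⟩⟩ :
    {i : Fin N // (i : ℕ) < k} × Icc (-τ) (0 : ℝ))).trans
    (le_max_of_le_left (le_max_left _ _))

theorem norm_le_Cinit_of_le {i : Fin N} (hi : k ≤ (i : ℕ)) : ‖x i 0‖ ≤ Cinit h k τ x y :=
  (le_ciSup (f := fun i : {i : Fin N // k ≤ (i : ℕ)} => ‖x i.1 0‖) (Set.finite_range _).bddAbove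
    ⟨i, hi⟩).trans (le_max_of_le_left (le_max_right _ _))

theorem norm_zero_le_Cinit (hx : ∀ i, Continuous (x i)) (hτ : 0 ≤ τ) (i : Fin N) :
    ‖x i 0‖ ≤ Cinit h k τ x y := by
  rcases lt_or_ge (i : ℕ) k with hi | hi
  · exact norm_le_Cinit_of_lt hx hi ⟨neg_nonpos.2 hτ, le_rfl⟩
  · exact norm_le_Cinit_of_le hi

theorem IsSol.exists_hasDerivAt_inner_nonpos (hsol : IsSol h k τ ψ ψs φ φs x y)
    (hψ : ∀ z w, 0 ≤ ψ z w) (hφ : ∀ z w, 0 ≤ φ z w) (i : Fin N) {t : ℝ} (ht : 0 < t) :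
    ∃ v, HasDerivAt (x i) v t ∧ ((∀ j, ‖x j t‖ ≤ ‖x i t‖) →
      (∀ j : Fin M, (j : ℕ) < h → ‖y j (t - τ)‖ ≤ ‖x i t‖) → ⟪x i t, v⟫ ≤ 0) := by
  have hN : (1 : ℝ) ≤ N := by exact_mod_cast i.pos
  have hNh : (0 : ℝ) ≤ N + h - 1 := by linarith [Nat.cast_nonneg (α := ℝ) h]
  rcases lt_or_ge (i : ℕ) k with hi | hi
  · refine ⟨_, hsol.odex_lead i hi t ht, fun hx hy => ?_⟩
    rw [inner_add_right]
    exact add_nonpos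
      (inner_sum_smul_sub_nonpos _ (fun j _ => div_nonneg (hψ _ _) hNh) fun j _ => hx j)
      (inner_sum_smul_sub_nonpos _ (fun j _ => div_nonneg (hφ _ _) hNh)
        fun j hj => hy j (Finset.mem_filter.1 hj).2)
  · exact ⟨_, hsol.odex_foll i hi t ht, fun hx _ =>
      inner_sum_smul_sub_nonpos _ (fun j _ => div_nonneg (hψ _ _) (by linarith))
        fun j _ => hx j⟩

theorem norm_lead_le_Cinit (hx : ∀ i, Continuous (x i)) {T : ℝ}
    (hbound : ∀ s ∈ Icc 0 T, ∀ i, ‖x i s‖ ≤ Cinit h k τ x y) {i : Fin N} (hi : (i : ℕ) < k) :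
    ∀ s ∈ Icc (-τ) T, ‖x i s‖ ≤ Cinit h k τ x y := fun s hs =>
  (le_or_gt s 0).elim (fun hs0 => norm_le_Cinit_of_lt hx hi ⟨hs.1, hs0⟩)
    fun hs0 => hbound s ⟨hs0.le, hs.2⟩ i

theorem IsSol.norm_le_on_step (hsol : IsSol h k τ ψ ψs φ φs x y)
    (hψ : ∀ z w, 0 ≤ ψ z w) (hψs : ∀ z w, 0 ≤ ψs z w)
    (hφ : ∀ z w, 0 ≤ φ z w) (hφs : ∀ z w, 0 ≤ φs z w) {C T : ℝ} (hC : 0 ≤ C) (hT : 0 ≤ T)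
    (hxT : ∀ i, ‖x i T‖ ≤ C) (hyT : ∀ j, ‖y j T‖ ≤ C)
    (hx_lead : ∀ i : Fin N, (i : ℕ) < k → ∀ s ∈ Icc (T - τ) T, ‖x i s‖ ≤ C)
    (hy_lead : ∀ j : Fin M, (j : ℕ) < h → ∀ s ∈ Icc (T - τ) T, ‖y j s‖ ≤ C) :
    ∀ t ∈ Icc T (T + τ), (∀ i, ‖x i t‖ ≤ C) ∧ ∀ j, ‖y j t‖ ≤ C := by
  set z : Fin N ⊕ Fin M → ℝ → EuclideanSpace ℝ (Fin d) := Sum.elim x y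
  have hvel : ∀ s ∈ Ioo T (T + τ), ∀ i, ∃ v, HasDerivAt (z i) v s ∧
      (C ≤ ‖z i s‖ → (∀ j, ‖z j s‖ ≤ ‖z i s‖) → ⟪z i s, v⟫ ≤ 0) := by
    intro s hs i
    have hs₀ : 0 < s := hT.trans_lt hs.1
    have hdelay : s - τ ∈ Icc (T - τ) T := ⟨by linarith [hs.1], by linarith [hs.2]⟩
    rcases i with i | j
    · obtain ⟨v, hv, hin⟩ := hsol.exists_hasDerivAt_inner_nonpos hψ hφ i hs₀
      exact ⟨v, hv, fun hCi hmax => hin (fun j => hmax (.inl j))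
        fun j hj => (hy_lead j hj _ hdelay).trans hCi⟩
    · obtain ⟨v, hv, hin⟩ := hsol.swap.exists_hasDerivAt_inner_nonpos hψs hφs j hs₀
      exact ⟨v, hv, fun hCj hmax => hin (fun l => hmax (.inr l))
        fun l hl => (hx_lead l hl _ hdelay).trans hCj⟩
  have hsq : ∀ t ∈ Icc T (T + τ), ∀ i, ‖z i t‖ ^ 2 ≤ C ^ 2 := by
    refine le_of_deriv_nonpos_at_max (fun i => ?_) (fun i s hs => ?_) ?_ fun s hs i hCi hmax => ?_
    · rcases i with i | j
      · exact ((hsol.contx i).norm.pow 2).continuousOn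
      · exact ((hsol.conty j).norm.pow 2).continuousOn
    · obtain ⟨v, hv, -⟩ := hvel s hs i
      exact hv.norm_sq.differentiableAt
    · rintro (i | j)
      · exact pow_le_pow_left₀ (norm_nonneg _) (hxT i) 2
      · exact pow_le_pow_left₀ (norm_nonneg _) (hyT j) 2
    · obtain ⟨v, hv, hin⟩ := hvel s hs i
      rw [hv.norm_sq.deriv]
      have := hin (lt_of_pow_lt_pow_left₀ 2 (norm_nonneg _) hCi).le fun j =>
        (pow_le_pow_iff_left₀ (norm_nonneg _) (norm_nonneg _) two_ne_zero).1 (hmax j)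
      linarith
  intro t ht
  have hz : ∀ i, ‖z i t‖ ≤ C := fun i =>
    (pow_le_pow_iff_left₀ (norm_nonneg _) hC two_ne_zero).1 (hsq t ht i)
  exact ⟨fun i => hz (.inl i), fun j => hz (.inr j)⟩

theorem IsSol.norm_le_Cinit (hsol : IsSol h k τ ψ ψs φ φs x y)
    (hψ : ∀ z w, 0 ≤ ψ z w) (hψs : ∀ z w, 0 ≤ ψs z w)
    (hφ : ∀ z w, 0 ≤ φ z w) (hφs : ∀ z w, 0 ≤ φs z w) (hτ : 0 < τ) :
    ∀ t, 0 ≤ t → (∀ i, ‖x i t‖ ≤ Cinit h k τ x y) ∧ ∀ j, ‖y j t‖ ≤ Cinit h k τ x y := by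
  refine forall_nonneg_of_forall_Icc_step hτ
    ⟨norm_zero_le_Cinit hsol.contx hτ.le, Cinit_swap ▸ norm_zero_le_Cinit hsol.conty hτ.le⟩
    fun T hT hbound => hsol.norm_le_on_step hψ hψs hφ hφs Cinit_nonneg hT
      (hbound T ⟨hT, le_rfl⟩).1 (hbound T ⟨hT, le_rfl⟩).2 (fun i hi s hs => ?_)
      fun j hj s hs => ?_
  · exact norm_lead_le_Cinit hsol.contx (fun s hs => (hbound s hs).1) hi s
      ⟨by linarith [hs.1], hs.2⟩
  · exact Cinit_swap ▸ norm_lead_le_Cinit hsol.conty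
      (fun s hs => Cinit_swap ▸ (hbound s hs).2) hj s ⟨by linarith [hs.1], hs.2⟩

end HegselmannKrause

theorem stmt2_general
    (d N M h k : ℕ)
    (τ : ℝ) (hτ : 0 < τ)
    (ψ ψs φ φs : EuclideanSpace ℝ (Fin d) → EuclideanSpace ℝ (Fin d) → ℝ)
    (hψ : Admissible ψ) (hψs : Admissible ψs) (hφ : Admissible φ) (hφs : Admissible φs)
    (x : Fin N → ℝ → EuclideanSpace ℝ (Fin d)) (y : Fin M → ℝ → EuclideanSpace ℝ (Fin d))
    (hsol : IsSol h k τ ψ ψs φ φs x y)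
    :
    (0 < minOnBall (Cinit h k τ x y) ψ ∧
      ∀ t : ℝ, 0 ≤ t → ∀ i j : Fin N, minOnBall (Cinit h k τ x y) ψ ≤ ψ (x i t) (x j t)) ∧
    (0 < minOnBall (Cinit h k τ x y) ψs ∧
      ∀ t : ℝ, 0 ≤ t → ∀ l r : Fin M, minOnBall (Cinit h k τ x y) ψs ≤ ψs (y l t) (y r t)) ∧
    (0 < minOnBall (Cinit h k τ x y) φ ∧
      ∀ t : ℝ, 0 ≤ t → ∀ i : Fin N, (i : ℕ) < k → ∀ j : Fin M, (j : ℕ) < h →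
        minOnBall (Cinit h k τ x y) φ ≤ φ (x i t) (y j (t - τ))) ∧
    (0 < minOnBall (Cinit h k τ x y) φs ∧
      ∀ t : ℝ, 0 ≤ t → ∀ l : Fin M, (l : ℕ) < h → ∀ r : Fin N, (r : ℕ) < k →
        minOnBall (Cinit h k τ x y) φs ≤ φs (y l t) (x r (t - τ))) := by
  obtain ⟨hψc, hψp, -⟩ := hψ
  obtain ⟨hψsc, hψsp, -⟩ := hψs
  obtain ⟨hφc, hφp, -⟩ := hφ
  obtain ⟨hφsc, hφsp, -⟩ := hφs
  have hbd := hsol.norm_le_Cinit (fun z w => (hψp z w).le) (fun z w => (hψsp z w).le)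
    (fun z w => (hφp z w).le) (fun z w => (hφsp z w).le) hτ
  have hx_delay : ∀ t, 0 ≤ t → ∀ r : Fin N, (r : ℕ) < k → ‖x r (t - τ)‖ ≤ Cinit h k τ x y :=
    fun t ht r hr => norm_lead_le_Cinit hsol.contx (fun s hs => (hbd s hs.1).1) hr _
      ⟨by linarith, by linarith⟩
  have hy_delay : ∀ t, 0 ≤ t → ∀ j : Fin M, (j : ℕ) < h → ‖y j (t - τ)‖ ≤ Cinit h k τ x y :=
    fun t ht j hj => Cinit_swap ▸ norm_lead_le_Cinit hsol.conty
      (fun s hs => Cinit_swap ▸ (hbd s hs.1).2) hj _ ⟨by linarith, by linarith⟩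
  exact ⟨⟨minOnBall_pos Cinit_nonneg hψc hψp, fun t ht i j =>
      minOnBall_le (fun z w => (hψp z w).le) ((hbd t ht).1 i) ((hbd t ht).1 j)⟩,
    ⟨minOnBall_pos Cinit_nonneg hψsc hψsp, fun t ht l r =>
      minOnBall_le (fun z w => (hψsp z w).le) ((hbd t ht).2 l) ((hbd t ht).2 r)⟩,
    ⟨minOnBall_pos Cinit_nonneg hφc hφp, fun t ht i _ j hj =>
      minOnBall_le (fun z w => (hφp z w).le) ((hbd t ht).1 i) (hy_delay t ht j hj)⟩,
    ⟨minOnBall_pos Cinit_nonneg hφsc hφsp, fun t ht l _ r hr =>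
      minOnBall_le (fun z w => (hφsp z w).le) ((hbd t ht).2 l) (hx_delay t ht r hr)⟩⟩

theorem stmt2
    (d N M h k : ℕ) (hd : 1 ≤ d) (hN : 2 ≤ N) (hM2 : 2 ≤ M) (hMN : M ≤ N)
    (hh1 : 1 ≤ h) (hhM : h < M) (hk1 : 1 ≤ k) (hkN : k < N)
    (τ : ℝ) (hτ : 0 < τ)
    (ψ ψs φ φs : EuclideanSpace ℝ (Fin d) → EuclideanSpace ℝ (Fin d) → ℝ)
    (hψ : Admissible ψ) (hψs : Admissible ψs) (hφ : Admissible φ) (hφs : Admissible φs)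
    (x : Fin N → ℝ → EuclideanSpace ℝ (Fin d)) (y : Fin M → ℝ → EuclideanSpace ℝ (Fin d))
    (hsol : IsSol h k τ ψ ψs φ φs x y)
    :
    (0 < minOnBall (Cinit h k τ x y) ψ ∧
      ∀ t : ℝ, 0 ≤ t → ∀ i j : Fin N, minOnBall (Cinit h k τ x y) ψ ≤ ψ (x i t) (x j t)) ∧
    (0 < minOnBall (Cinit h k τ x y) ψs ∧
      ∀ t : ℝ, 0 ≤ t → ∀ l r : Fin M, minOnBall (Cinit h k τ x y) ψs ≤ ψs (y l t) (y r t)) ∧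
    (0 < minOnBall (Cinit h k τ x y) φ ∧
      ∀ t : ℝ, 0 ≤ t → ∀ i : Fin N, (i : ℕ) < k → ∀ j : Fin M, (j : ℕ) < h →
        minOnBall (Cinit h k τ x y) φ ≤ φ (x i t) (y j (t - τ))) ∧
    (0 < minOnBall (Cinit h k τ x y) φs ∧
      ∀ t : ℝ, 0 ≤ t → ∀ l : Fin M, (l : ℕ) < h → ∀ r : Fin N, (r : ℕ) < k →
        minOnBall (Cinit h k τ x y) φs ≤ φs (y l t) (x r (t - τ))) :=
  stmt2_general d N M h k τ hτ ψ ψs φ φs hψ hψs hφ hφs x y hsol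
end
end

section
/- Assume 0 < m_0 ≤ M_0 for a fixed vector v ∈ ℝ^d, and suppose there exists L ∈ {k+1,…,N} with ⟨x_L(0), v⟩ = m_0. Set δ⁻₁ := (1 − e^{−Λσ}) (1/(2(N−1))) (Γ/Λ) (1 − m_0/M_0). Then ⟨x_i(σ), v⟩ ≤ (1 − δ⁻₁) M_0 for every i ∈ {k+1,…,N} with i ≠ L. -/
open Real Set Filter Topology
open scoped BigOperators RealInnerProductSpace

noncomputable section

lemma myBddAboveProd {α : Type*} [Finite α] {a b : ℝ} (f : α → ℝ → ℝ)
    (hf : ∀ i, Continuous (f i)) :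
    BddAbove (Set.range fun p : α × (Icc a b) => f p.1 (p.2 : ℝ)) := by
  have key : ∀ i : α, BddAbove (f i '' Icc a b) := fun i =>
    (isCompact_Icc.image_of_continuousOn (hf i).continuousOn).bddAbove
  choose C hC using key
  obtain ⟨D, hD⟩ := Finite.exists_le C
  refine ⟨D, ?_⟩
  rintro _ ⟨⟨i, s⟩, rfl⟩
  exact le_trans (hC i ⟨(s : ℝ), s.2, rfl⟩) (hD i)

lemma term_bound {c C a b m : ℝ} (hc : 0 ≤ c) (hcC : c ≤ C) (ha : a ≤ m) (hb : b ≤ m) :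
    c * (a - b) ≤ C * (m - b) := by nlinarith
section AuxInv

variable {d N M h k : ℕ} {τ : ℝ}
  {ψ ψs φ φs : EuclideanSpace ℝ (Fin d) → EuclideanSpace ℝ (Fin d) → ℝ}
  {x : Fin N → ℝ → EuclideanSpace ℝ (Fin d)}
  {y : Fin M → ℝ → EuclideanSpace ℝ (Fin d)}

/-- derivative of the projection of `x i` on `w`. -/
lemma proj_hasDerivAt {f : ℝ → EuclideanSpace ℝ (Fin d)} {f' : EuclideanSpace ℝ (Fin d)}
    {t : ℝ} (hf : HasDerivAt f f' t) (w : EuclideanSpace ℝ (Fin d)) :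
    HasDerivAt (fun s => ⟪f s, w⟫) ⟪f', w⟫ t := by
  simpa using hf.inner ℝ (hasDerivAt_const t w)

lemma proj_sum_nonpos {ι : Type*} (s : Finset ι) (c : ι → ℝ)
    (z : ι → EuclideanSpace ℝ (Fin d)) (z₀ w : EuclideanSpace ℝ (Fin d))
    (hc : ∀ j ∈ s, 0 ≤ c j) (hz : ∀ j ∈ s, ⟪z j, w⟫ ≤ ⟪z₀, w⟫) :
    ⟪∑ j ∈ s, c j • (z j - z₀), w⟫ ≤ 0 := by
  rw [sum_inner]
  refine Finset.sum_nonpos fun j hj => ?_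
  rw [real_inner_smul_left, inner_sub_left]
  exact mul_nonpos_of_nonneg_of_nonpos (hc j hj) (sub_nonpos.mpr (hz j hj))

set_option maxHeartbeats 1000000 in
lemma invariance
    (hN : 2 ≤ N) (hM2 : 2 ≤ M) (hτ : 0 < τ)
    (hψ : Admissible ψ) (hψs : Admissible ψs) (hφ : Admissible φ) (hφs : Admissible φs)
    (hsol : IsSol h k τ ψ ψs φ φs x y)
    (w : EuclideanSpace ℝ (Fin d)) (B : ℝ) (σ' : ℝ) (hσ'τ : σ' ≤ τ)
    (hxl : ∀ i : Fin N, (i : ℕ) < k → ∀ s, -τ ≤ s → s ≤ 0 → ⟪x i s, w⟫ ≤ B)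
    (hxf : ∀ i : Fin N, k ≤ (i : ℕ) → ⟪x i 0, w⟫ ≤ B)
    (hyl : ∀ j : Fin M, (j : ℕ) < h → ∀ s, -τ ≤ s → s ≤ 0 → ⟪y j s, w⟫ ≤ B)
    (hyf : ∀ j : Fin M, h ≤ (j : ℕ) → ⟪y j 0, w⟫ ≤ B) :
    ∀ t, 0 ≤ t → t ≤ σ' → (∀ i, ⟪x i t, w⟫ ≤ B) ∧ (∀ j, ⟪y j t, w⟫ ≤ B) := by
  -- the combined family of projections
  set F : (Fin N ⊕ Fin M) → ℝ → ℝ := fun a t =>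
    Sum.elim (fun i => ⟪x i t, w⟫) (fun j => ⟪y j t, w⟫) a with hF
  have hFcont : ∀ a, Continuous (F a) := by
    rintro (i | j)
    · exact (hsol.contx i).inner continuous_const
    · exact (hsol.conty j).inner continuous_const
  have hF0 : ∀ a, F a 0 ≤ B := by
    rintro (i | j)
    · rcases lt_or_ge (i : ℕ) k with hi | hi
      · exact hxl i hi 0 (by linarith) le_rfl
      · exact hxf i hi
    · rcases lt_or_ge (j : ℕ) h with hj | hj
      · exact hyl j hj 0 (by linarith) le_rfl
      · exact hyf j hj
  -- main claim with ε margin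
  have key : ∀ ε : ℝ, 0 < ε → ∀ t, 0 ≤ t → t ≤ σ' → ∀ a, F a t < B + ε * Real.exp t := by
    intro ε hε
    by_contra hcon
    push_neg at hcon
    obtain ⟨t₀, ht₀0, ht₀σ, a₀, ha₀⟩ := hcon
    set V : Set ℝ := {t | t ∈ Icc 0 σ' ∧ ∃ a, B + ε * Real.exp t ≤ F a t} with hV
    have hVne : V.Nonempty := ⟨t₀, ⟨ht₀0, ht₀σ⟩, a₀, ha₀⟩
    have hVbdd : BddBelow V := ⟨0, fun s hs => hs.1.1⟩
    have hVclosed : IsClosed V := by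
      have : V = Icc 0 σ' ∩ ⋃ a, {t | B + ε * Real.exp t ≤ F a t} := by
        ext s; simp [hV, Set.mem_iUnion, and_comm]
      rw [this]
      refine isClosed_Icc.inter (isClosed_iUnion_of_finite fun a => ?_)
      exact isClosed_le (continuous_const.add (continuous_const.mul Real.continuous_exp)) (hFcont a)
    set T := sInf V with hT
    have hTV : T ∈ V := hVclosed.csInf_mem hVne hVbdd
    have hT0 : 0 ≤ T := hTV.1.1
    have hTσ : T ≤ σ' := hTV.1.2
    have hTpos : 0 < T := by
      rcases hT0.lt_or_eq with hlt | heq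
      · exact hlt
      · exfalso
        obtain ⟨a, ha⟩ := hTV.2
        rw [← heq] at ha
        have := hF0 a
        simp only [Real.exp_zero, mul_one] at ha
        nlinarith
    have hbefore : ∀ s, 0 ≤ s → s < T → ∀ a, F a s < B + ε * Real.exp s := by
      intro s hs0 hsT a
      by_contra hc
      push_neg at hc
      have : s ∈ V := ⟨⟨hs0, hsT.le.trans hTσ⟩, a, hc⟩
      exact absurd (csInf_le hVbdd this) (not_le.mpr hsT)
    have hatT : ∀ a, F a T ≤ B + ε * Real.exp T := by
      intro a
      have h1 : Tendsto (F a) (𝓝[<] T) (𝓝 (F a T)) :=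
        ((hFcont a).tendsto T).mono_left nhdsWithin_le_nhds
      have h2 : Tendsto (fun s => B + ε * Real.exp s) (𝓝[<] T) (𝓝 (B + ε * Real.exp T)) :=
        ((continuous_const.add (continuous_const.mul Real.continuous_exp)).tendsto T).mono_left
          nhdsWithin_le_nhds
      refine le_of_tendsto_of_tendsto h1 h2 ?_
      filter_upwards [Ioo_mem_nhdsLT hTpos] with s hs
      exact (hbefore s hs.1.le hs.2 a).le
    obtain ⟨a₁, ha₁⟩ := hTV.2
    have hFT : F a₁ T = B + ε * Real.exp T := le_antisymm (hatT a₁) ha₁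
    -- the derivative of F a₁ at T is nonpositive
    have hderiv : ∃ D : ℝ, HasDerivAt (F a₁) D T ∧ D ≤ 0 := by
      have hBle : B ≤ B + ε * Real.exp T := by nlinarith [Real.exp_pos T]
      have hN2 : (2:ℝ) ≤ (N:ℝ) := by exact_mod_cast hN
      have hM2' : (2:ℝ) ≤ (M:ℝ) := by exact_mod_cast hM2
      have hh0 : (0:ℝ) ≤ (h:ℝ) := Nat.cast_nonneg h
      have hk0 : (0:ℝ) ≤ (k:ℝ) := Nat.cast_nonneg k
      have hTτ1 : -τ ≤ T - τ := by linarith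
      have hTτ2 : T - τ ≤ 0 := by linarith
      obtain (i | j) := a₁
      · simp only [hF, Sum.elim_inl] at hFT
        have hxiT : ∀ j : Fin N, ⟪x j T, w⟫ ≤ ⟪x i T, w⟫ := fun j =>
          (hatT (Sum.inl j)).trans_eq hFT.symm
        rcases lt_or_ge (i : ℕ) k with hi | hi
        · refine ⟨_, proj_hasDerivAt (hsol.odex_lead i hi T hTpos) w, ?_⟩
          rw [inner_add_left]
          have h1 := proj_sum_nonpos (Finset.univ.erase i)
            (fun j => ψ (x i T) (x j T) / ((N:ℝ) + h - 1)) (fun j => x j T) (x i T) w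
            (fun j _ => div_nonneg (hψ.2.1 _ _).le (by linarith))
            (fun j _ => hxiT j)
          have h2 := proj_sum_nonpos (Finset.univ.filter (fun j : Fin M => (j : ℕ) < h))
            (fun j => φ (x i T) (y j (T - τ)) / ((N:ℝ) + h - 1)) (fun j => y j (T - τ))
            (x i T) w
            (fun j _ => div_nonneg (hφ.2.1 _ _).le (by linarith))
            (fun j hj => le_trans (le_trans (hyl j (Finset.mem_filter.mp hj).2 _ hTτ1 hTτ2) hBle)
              hFT.ge)
          linarith
        · refine ⟨_, proj_hasDerivAt (hsol.odex_foll i hi T hTpos) w, ?_⟩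
          exact proj_sum_nonpos (Finset.univ.erase i)
            (fun j => ψ (x i T) (x j T) / ((N:ℝ) - 1)) (fun j => x j T) (x i T) w
            (fun j _ => div_nonneg (hψ.2.1 _ _).le (by linarith))
            (fun j _ => hxiT j)
      · simp only [hF, Sum.elim_inr] at hFT
        have hyjT : ∀ i : Fin M, ⟪y i T, w⟫ ≤ ⟪y j T, w⟫ := fun i =>
          (hatT (Sum.inr i)).trans_eq hFT.symm
        rcases lt_or_ge (j : ℕ) h with hj | hj
        · refine ⟨_, proj_hasDerivAt (hsol.odey_lead j hj T hTpos) w, ?_⟩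
          rw [inner_add_left]
          have h1 := proj_sum_nonpos (Finset.univ.erase j)
            (fun i => ψs (y j T) (y i T) / ((M:ℝ) + k - 1)) (fun i => y i T) (y j T) w
            (fun i _ => div_nonneg (hψs.2.1 _ _).le (by linarith))
            (fun i _ => hyjT i)
          have h2 := proj_sum_nonpos (Finset.univ.filter (fun i : Fin N => (i : ℕ) < k))
            (fun i => φs (y j T) (x i (T - τ)) / ((M:ℝ) + k - 1)) (fun i => x i (T - τ))
            (y j T) w
            (fun i _ => div_nonneg (hφs.2.1 _ _).le (by linarith))
            (fun i hi => le_trans (le_trans (hxl i (Finset.mem_filter.mp hi).2 _ hTτ1 hTτ2) hBle)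
              hFT.ge)
          linarith
        · refine ⟨_, proj_hasDerivAt (hsol.odey_foll j hj T hTpos) w, ?_⟩
          exact proj_sum_nonpos (Finset.univ.erase j)
            (fun i => ψs (y j T) (y i T) / ((M:ℝ) - 1)) (fun i => y i T) (y j T) w
            (fun i _ => div_nonneg (hψs.2.1 _ _).le (by linarith))
            (fun i _ => hyjT i)
    obtain ⟨D, hD, hD0⟩ := hderiv
    -- contradiction: g = F a₁ - (B + ε exp) has g(T)=0, g<0 before, g'(T)<0
    have hg : HasDerivAt (fun s => F a₁ s - (B + ε * Real.exp s)) (D - ε * Real.exp T) T := by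
      exact hD.sub ((Real.hasDerivAt_exp T).const_mul ε |>.const_add B)
    set g := fun s => F a₁ s - (B + ε * Real.exp s) with hgdef
    have hgT : g T = 0 := by simp [hgdef, hFT]
    have hgneg : D - ε * Real.exp T < 0 := by
      have := Real.exp_pos T; nlinarith
    have hslope := hasDerivAt_iff_tendsto_slope.mp hg
    have hev : ∀ᶠ s in 𝓝[<] T, slope g T s < 0 :=
      (hslope.mono_left (nhdsWithin_mono T (fun s hs => ne_of_lt hs))).eventually
        (Filter.Tendsto.eventually_lt_const hgneg tendsto_id |>.mono fun _ h => h)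
    have hev2 : ∀ᶠ s in 𝓝[<] T, s ∈ Ioo (0:ℝ) T := Ioo_mem_nhdsLT hTpos
    obtain ⟨s, hs1, hs2⟩ := (hev.and hev2).exists
    have hsT : s - T < 0 := sub_neg.mpr hs2.2
    have hgs : 0 < g s := by
      have hsl : slope g T s = g s / (s - T) := by
        rw [slope_def_field, hgT, sub_zero]
      rw [hsl] at hs1
      rcases div_neg_iff.mp hs1 with ⟨h1, _⟩ | ⟨_, h2⟩
      · exact h1
      · linarith
    have := hbefore s hs2.1.le hs2.2 a₁
    simp only [hgdef] at hgs
    linarith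
  intro t ht0 htσ
  constructor
  · intro i
    by_contra hc
    push_neg at hc
    have h1 : 0 < (⟪x i t, w⟫ - B) / Real.exp t := div_pos (by linarith) (Real.exp_pos t)
    have := key _ h1 t ht0 htσ (Sum.inl i)
    simp only [hF, Sum.elim_inl] at this
    rw [div_mul_cancel₀ _ (Real.exp_pos t).ne'] at this
    linarith
  · intro j
    by_contra hc
    push_neg at hc
    have h1 : 0 < (⟪y j t, w⟫ - B) / Real.exp t := div_pos (by linarith) (Real.exp_pos t)
    have := key _ h1 t ht0 htσ (Sum.inr j)
    simp only [hF, Sum.elim_inr] at this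
    rw [div_mul_cancel₀ _ (Real.exp_pos t).ne'] at this
    linarith

end AuxInv
set_option maxHeartbeats 2000000

theorem stmt5
    (d N M h k : ℕ) (hd : 1 ≤ d) (hN : 2 ≤ N) (hM2 : 2 ≤ M) (hMN : M ≤ N)
    (hh1 : 1 ≤ h) (hhM : h < M) (hk1 : 1 ≤ k) (hkN : k < N)
    (τ : ℝ) (hτ : 0 < τ)
    (ψ ψs φ φs : EuclideanSpace ℝ (Fin d) → EuclideanSpace ℝ (Fin d) → ℝ)
    (hψ : Admissible ψ) (hψs : Admissible ψs) (hφ : Admissible φ) (hφs : Admissible φs)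
    (x : Fin N → ℝ → EuclideanSpace ℝ (Fin d)) (y : Fin M → ℝ → EuclideanSpace ℝ (Fin d))
    (hsol : IsSol h k τ ψ ψs φ φs x y)
    (v : EuclideanSpace ℝ (Fin d)) (Λ Γ m₀ M₀ : ℝ)
    (hΛ : Λ = Lam ψ ψs φ φs) (hΓ : Γ = Gam h k τ ψ ψs φ φs x y)
    (hm₀ : m₀ = mInit h k τ v x y) (hM₀ : M₀ = MInit h k τ v x y)
    (hm₀pos : 0 < m₀) (hm₀M₀ : m₀ ≤ M₀)
    (σ : ℝ) (hσ : σ = min τ ((M₀ - m₀) / (4 * Λ * M₀)))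
    (L : Fin N) (hLk : k ≤ (L : ℕ)) (hLm : ⟪x L 0, v⟫ = m₀) (δ₁ : ℝ)
    (hδ₁ : δ₁ = (1 - Real.exp (-(Λ * σ))) * (1 / (2 * ((N : ℝ) - 1))) * (Γ / Λ) * (1 - m₀ / M₀))
    :
    ∀ i : Fin N, k ≤ (i : ℕ) → i ≠ L → ⟪x i σ, v⟫ ≤ (1 - δ₁) * M₀ := by
  classical
  -- basic numeric facts
  have hN2 : (2:ℝ) ≤ (N:ℝ) := by exact_mod_cast hN
  have hNR : (0:ℝ) < (N:ℝ) - 1 := by linarith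
  have hM₀pos : 0 < M₀ := lt_of_lt_of_le hm₀pos hm₀M₀
  -- Λ bounds
  have hψΛ : ∀ z1 z2, ψ z1 z2 ≤ Λ := by
    intro z1 z2
    rw [hΛ]
    exact le_trans (le_trans (le_ciSup hψ.2.2 (z1, z2)) (le_max_left _ _)) (le_max_left _ _)
  have hΛpos : 0 < Λ := lt_of_lt_of_le (hψ.2.1 0 0) (hψΛ 0 0)
  -- σ facts
  have hσ0 : 0 ≤ σ := by
    rw [hσ]
    exact le_min hτ.le (div_nonneg (by linarith) (by positivity))
  have hστ : σ ≤ τ := by rw [hσ]; exact min_le_left _ _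
  have hΛσ : Λ * σ ≤ 1/4 := by
    have h1 : σ ≤ (M₀ - m₀) / (4 * Λ * M₀) := by rw [hσ]; exact min_le_right _ _
    have h2 : Λ * σ ≤ Λ * ((M₀ - m₀) / (4 * Λ * M₀)) :=
      mul_le_mul_of_nonneg_left h1 hΛpos.le
    have h3 : Λ * ((M₀ - m₀) / (4 * Λ * M₀)) = (M₀ - m₀) / (4 * M₀) := by
      field_simp
    rw [h3] at h2
    have h4 : (M₀ - m₀) / (4 * M₀) ≤ 1/4 := by
      rw [div_le_div_iff₀ (by positivity) (by norm_num)]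
      nlinarith
    linarith
  -- projections of initial data bounded by M₀
  have hMxl : ∀ i : Fin N, (i : ℕ) < k → ∀ s, -τ ≤ s → s ≤ 0 → ⟪x i s, v⟫ ≤ M₀ := by
    intro i hi s h1 h2
    rw [hM₀]
    refine le_trans (le_trans ?_ (le_max_left _ _)) (le_max_left _ _)
    exact le_ciSup (myBddAboveProd (fun q : {i : Fin N // (i : ℕ) < k} => fun s => ⟪x q.1 s, v⟫)
      (fun q => (hsol.contx q.1).inner continuous_const)) (⟨⟨i, hi⟩, ⟨s, h1, h2⟩⟩)
  have hMxf : ∀ i : Fin N, k ≤ (i : ℕ) → ⟪x i 0, v⟫ ≤ M₀ := by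
    intro i hi
    rw [hM₀]
    refine le_trans (le_trans ?_ (le_max_right _ _)) (le_max_left _ _)
    exact le_ciSup (f := fun q : {i : Fin N // k ≤ (i : ℕ)} => ⟪x q.1 0, v⟫)
      (Set.Finite.bddAbove (Set.finite_range _)) ⟨i, hi⟩
  have hMyl : ∀ j : Fin M, (j : ℕ) < h → ∀ s, -τ ≤ s → s ≤ 0 → ⟪y j s, v⟫ ≤ M₀ := by
    intro j hj s h1 h2
    rw [hM₀]
    refine le_trans (le_trans ?_ (le_max_left _ _)) (le_max_right _ _)
    exact le_ciSup (myBddAboveProd (fun q : {j : Fin M // (j : ℕ) < h} => fun s => ⟪y q.1 s, v⟫)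
      (fun q => (hsol.conty q.1).inner continuous_const)) (⟨⟨j, hj⟩, ⟨s, h1, h2⟩⟩)
  have hMyf : ∀ j : Fin M, h ≤ (j : ℕ) → ⟪y j 0, v⟫ ≤ M₀ := by
    intro j hj
    rw [hM₀]
    refine le_trans (le_trans ?_ (le_max_right _ _)) (le_max_right _ _)
    exact le_ciSup (f := fun q : {j : Fin M // h ≤ (j : ℕ)} => ⟪y q.1 0, v⟫)
      (Set.Finite.bddAbove (Set.finite_range _)) ⟨j, hj⟩
  -- invariance for the direction v
  have hInv := invariance hN hM2 hτ hψ hψs hφ hφs hsol v M₀ σ hστ hMxl hMxf hMyl hMyf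
  -- norms of initial data bounded by C₀
  set C₀ := Cinit h k τ x y with hC₀
  have hCxl : ∀ i : Fin N, (i : ℕ) < k → ∀ s, -τ ≤ s → s ≤ 0 → ‖x i s‖ ≤ C₀ := by
    intro i hi s h1 h2
    refine le_trans (le_trans ?_ (le_max_left _ _)) (le_max_left _ _)
    exact le_ciSup (myBddAboveProd (fun q : {i : Fin N // (i : ℕ) < k} => fun s => ‖x q.1 s‖)
      (fun q => (hsol.contx q.1).norm)) (⟨⟨i, hi⟩, ⟨s, h1, h2⟩⟩)
  have hCxf : ∀ i : Fin N, k ≤ (i : ℕ) → ‖x i 0‖ ≤ C₀ := by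
    intro i hi
    refine le_trans (le_trans ?_ (le_max_right _ _)) (le_max_left _ _)
    exact le_ciSup (f := fun q : {i : Fin N // k ≤ (i : ℕ)} => ‖x q.1 0‖)
      (Set.Finite.bddAbove (Set.finite_range _)) ⟨i, hi⟩
  have hCyl : ∀ j : Fin M, (j : ℕ) < h → ∀ s, -τ ≤ s → s ≤ 0 → ‖y j s‖ ≤ C₀ := by
    intro j hj s h1 h2
    refine le_trans (le_trans ?_ (le_max_left _ _)) (le_max_right _ _)
    exact le_ciSup (myBddAboveProd (fun q : {j : Fin M // (j : ℕ) < h} => fun s => ‖y q.1 s‖)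
      (fun q => (hsol.conty q.1).norm)) (⟨⟨j, hj⟩, ⟨s, h1, h2⟩⟩)
  have hCyf : ∀ j : Fin M, h ≤ (j : ℕ) → ‖y j 0‖ ≤ C₀ := by
    intro j hj
    refine le_trans (le_trans ?_ (le_max_right _ _)) (le_max_right _ _)
    exact le_ciSup (f := fun q : {j : Fin M // h ≤ (j : ℕ)} => ‖y q.1 0‖)
      (Set.Finite.bddAbove (Set.finite_range _)) ⟨j, hj⟩
  have hC₀0 : 0 ≤ C₀ := le_trans (norm_nonneg (x L 0)) (hCxf L hLk)
  -- norms stay bounded by C₀ on [0, σ]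
  have hnorm : ∀ t, 0 ≤ t → t ≤ σ → ∀ i : Fin N, ‖x i t‖ ≤ C₀ := by
    intro t ht0 htσ i
    rcases eq_or_ne (x i t) 0 with h0 | h0
    · rw [h0, norm_zero]; exact hC₀0
    · set w : EuclideanSpace ℝ (Fin d) := ‖x i t‖⁻¹ • x i t with hw
      have hwn : ‖w‖ = 1 := norm_smul_inv_norm h0
      have hb : ∀ z : EuclideanSpace ℝ (Fin d), ‖z‖ ≤ C₀ → ⟪z, w⟫ ≤ C₀ := by
        intro z hz
        refine le_trans (real_inner_le_norm z w) ?_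
        rw [hwn, mul_one]; exact hz
      have hi := (invariance hN hM2 hτ hψ hψs hφ hφs hsol w C₀ σ hστ
        (fun i hi s h1 h2 => hb _ (hCxl i hi s h1 h2))
        (fun i hi => hb _ (hCxf i hi))
        (fun j hj s h1 h2 => hb _ (hCyl j hj s h1 h2))
        (fun j hj => hb _ (hCyf j hj)) t ht0 htσ).1 i
      have hinner : ⟪x i t, w⟫ = ‖x i t‖ := by
        rw [hw, real_inner_smul_right, real_inner_self_eq_norm_sq]
        field_simp [norm_ne_zero_iff.mpr h0]
      rwa [hinner] at hi
  -- Γ bounds the interaction coefficient from below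
  have hΓle : ∀ z1 z2 : EuclideanSpace ℝ (Fin d), ‖z1‖ ≤ C₀ → ‖z2‖ ≤ C₀ → Γ ≤ ψ z1 z2 := by
    intro z1 z2 h1 h2
    rw [hΓ]
    refine le_trans (min_le_left _ _) (le_trans (min_le_left _ _) ?_)
    exact ciInf_le ⟨0, by rintro _ ⟨p, rfl⟩; exact (hψ.2.1 _ _).le⟩
      (⟨(z1, z2), h1, h2⟩ : {z : EuclideanSpace ℝ (Fin d) × EuclideanSpace ℝ (Fin d) //
        ‖z.1‖ ≤ C₀ ∧ ‖z.2‖ ≤ C₀})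
  have hΓ0 : 0 ≤ Γ := by
    rw [hΓ]
    exact le_min
      (le_min (Real.iInf_nonneg fun p => (hψ.2.1 _ _).le)
        (Real.iInf_nonneg fun p => (hψs.2.1 _ _).le))
      (le_min (Real.iInf_nonneg fun p => (hφ.2.1 _ _).le)
        (Real.iInf_nonneg fun p => (hφs.2.1 _ _).le))
  -- cardinality of erased sets
  have cardE : ((Finset.univ.erase L).card : ℝ) = (N:ℝ) - 1 := by
    rw [Finset.card_erase_of_mem (Finset.mem_univ L), Finset.card_univ, Fintype.card_fin]
    rw [Nat.cast_sub (by omega : 1 ≤ N)]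
    norm_num
  -- the basic differential inequality for followers
  have sumbound : ∀ i : Fin N, k ≤ (i : ℕ) → ∀ t, 0 < t → t ≤ σ →
      ⟪∑ j ∈ Finset.univ.erase i, (ψ (x i t) (x j t) / ((N:ℝ) - 1)) • (x j t - x i t), v⟫
        ≤ Λ * (M₀ - ⟪x i t, v⟫) := by
    intro i hi t ht0 htσ
    have hFb := (hInv t ht0.le htσ).1
    rw [sum_inner]
    have hstep : ∀ j ∈ Finset.univ.erase i,
        ⟪(ψ (x i t) (x j t) / ((N:ℝ) - 1)) • (x j t - x i t), v⟫
          ≤ (Λ / ((N:ℝ) - 1)) * (M₀ - ⟪x i t, v⟫) := by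
      intro j _
      rw [real_inner_smul_left, inner_sub_left]
      refine term_bound (div_nonneg (hψ.2.1 _ _).le hNR.le) ?_ (hFb j) (hFb i)
      exact (div_le_div_iff_of_pos_right hNR).mpr (hψΛ _ _)
    calc ∑ j ∈ Finset.univ.erase i, ⟪(ψ (x i t) (x j t) / ((N:ℝ) - 1)) • (x j t - x i t), v⟫
        ≤ ∑ _j ∈ Finset.univ.erase i, (Λ / ((N:ℝ) - 1)) * (M₀ - ⟪x i t, v⟫) :=
          Finset.sum_le_sum hstep
      _ = Λ * (M₀ - ⟪x i t, v⟫) := by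
          rw [Finset.sum_const, nsmul_eq_mul]
          rw [Finset.card_erase_of_mem (Finset.mem_univ i), Finset.card_univ, Fintype.card_fin,
            Nat.cast_sub (by omega : 1 ≤ N)]
          push_cast
          field_simp
  -- Step 2 : the agent L stays below (M₀ + m₀)/2 on [0, σ]
  have hxLb : ∀ t, 0 ≤ t → t ≤ σ → ⟪x L t, v⟫ ≤ (M₀ + m₀) / 2 := by
    have hdiff : ∀ t ∈ Ioo 0 σ,
        HasDerivAt (fun t => Real.exp (Λ * t) * (⟪x L t, v⟫ - M₀))
          (Λ * Real.exp (Λ * t) * (⟪x L t, v⟫ - M₀) + Real.exp (Λ * t) *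
            ⟪∑ j ∈ Finset.univ.erase L,
              (ψ (x L t) (x j t) / ((N:ℝ) - 1)) • (x j t - x L t), v⟫) t := by
      intro t ht
      have he : HasDerivAt (fun t => Real.exp (Λ * t)) (Λ * Real.exp (Λ * t)) t := by
        simpa [mul_comm] using ((hasDerivAt_id t).const_mul Λ).exp
      have hp : HasDerivAt (fun s => ⟪x L s, v⟫ - M₀)
          ⟪∑ j ∈ Finset.univ.erase L,
            (ψ (x L t) (x j t) / ((N:ℝ) - 1)) • (x j t - x L t), v⟫ t :=
        (proj_hasDerivAt (hsol.odex_foll L hLk t ht.1) v).sub_const M₀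
      exact he.mul hp
    have hanti : AntitoneOn (fun t => Real.exp (Λ * t) * (⟪x L t, v⟫ - M₀)) (Icc 0 σ) := by
      apply antitoneOn_of_deriv_nonpos (convex_Icc 0 σ)
      · exact ((Real.continuous_exp.comp (continuous_const.mul continuous_id)).mul
          (((hsol.contx L).inner continuous_const).sub continuous_const)).continuousOn
      · rw [interior_Icc]
        exact fun t ht => ((hdiff t ht).differentiableAt).differentiableWithinAt
      · rw [interior_Icc]
        intro t ht
        rw [(hdiff t ht).deriv]
        have hs := sumbound L hLk t ht.1 ht.2.le
        nlinarith [mul_le_mul_of_nonneg_left hs (Real.exp_pos (Λ * t)).le,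
          Real.exp_pos (Λ * t)]
    intro t ht0 htσ
    have h1 := hanti (Set.left_mem_Icc.mpr hσ0) ⟨ht0, htσ⟩ ht0
    simp only [mul_zero, Real.exp_zero, one_mul, hLm] at h1
    have hE2 : Real.exp (Λ * t) ≤ 2 := by
      have h3 : (1:ℝ)/2 ≤ Real.exp (-(Λ * t)) := by
        have h4 := Real.add_one_le_exp (-(Λ * t))
        have h5 : Λ * t ≤ 1/4 := le_trans (mul_le_mul_of_nonneg_left htσ hΛpos.le) hΛσ
        linarith
      have h6 : Real.exp (Λ * t) * Real.exp (-(Λ * t)) = 1 := by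
        rw [← Real.exp_add]; simp
      nlinarith [Real.exp_pos (Λ * t)]
    have h5 : ⟪x L t, v⟫ ≤ M₀ := (hInv t ht0 htσ).1 L
    nlinarith [mul_le_mul_of_nonpos_right hE2 (by linarith : ⟪x L t, v⟫ - M₀ ≤ 0)]
  -- Step 3 : refined differential inequality for followers other than L
  set c := Γ * (M₀ - m₀) / (2 * ((N:ℝ) - 1)) with hc
  have hc0 : 0 ≤ c := by
    rw [hc]
    exact div_nonneg (mul_nonneg hΓ0 (by linarith)) (by linarith)
  have sumbound2 : ∀ i : Fin N, k ≤ (i : ℕ) → i ≠ L → ∀ t, 0 < t → t ≤ σ →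
      ⟪∑ j ∈ Finset.univ.erase i, (ψ (x i t) (x j t) / ((N:ℝ) - 1)) • (x j t - x i t), v⟫
        ≤ Λ * (M₀ - ⟪x i t, v⟫) - c := by
    intro i hi hiL t ht0 htσ
    have hFb := (hInv t ht0.le htσ).1
    have hLmem : L ∈ Finset.univ.erase i :=
      Finset.mem_erase.mpr ⟨Ne.symm hiL, Finset.mem_univ L⟩
    rw [sum_inner, ← Finset.add_sum_erase _ _ hLmem]
    have hstep : ∀ j ∈ (Finset.univ.erase i).erase L,
        ⟪(ψ (x i t) (x j t) / ((N:ℝ) - 1)) • (x j t - x i t), v⟫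
          ≤ (Λ / ((N:ℝ) - 1)) * (M₀ - ⟪x i t, v⟫) := by
      intro j _
      rw [real_inner_smul_left, inner_sub_left]
      exact term_bound (div_nonneg (hψ.2.1 _ _).le hNR.le)
        ((div_le_div_iff_of_pos_right hNR).mpr (hψΛ _ _)) (hFb j) (hFb i)
    have hrest : ∑ j ∈ (Finset.univ.erase i).erase L,
        ⟪(ψ (x i t) (x j t) / ((N:ℝ) - 1)) • (x j t - x i t), v⟫
          ≤ ((N:ℝ) - 2) * ((Λ / ((N:ℝ) - 1)) * (M₀ - ⟪x i t, v⟫)) := by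
      refine le_trans (Finset.sum_le_sum hstep) ?_
      rw [Finset.sum_const, nsmul_eq_mul]
      have hcard : (((Finset.univ.erase i).erase L).card : ℝ) = (N:ℝ) - 2 := by
        rw [Finset.card_erase_of_mem hLmem, Finset.card_erase_of_mem (Finset.mem_univ i),
          Finset.card_univ, Fintype.card_fin]
        have hnn : N - 1 - 1 = N - 2 := by omega
        rw [hnn, Nat.cast_sub (by omega : 2 ≤ N)]
        norm_num
      rw [hcard]
    have hLterm : ⟪(ψ (x i t) (x L t) / ((N:ℝ) - 1)) • (x L t - x i t), v⟫
        ≤ (Λ / ((N:ℝ) - 1)) * (M₀ - ⟪x i t, v⟫) + (Γ / ((N:ℝ) - 1)) * ((m₀ - M₀) / 2) := by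
      rw [real_inner_smul_left, inner_sub_left]
      set p := ψ (x i t) (x L t) / ((N:ℝ) - 1) with hp
      have hp1 : Γ / ((N:ℝ) - 1) ≤ p :=
        (div_le_div_iff_of_pos_right hNR).mpr (hΓle _ _ (hnorm t ht0.le htσ i) (hnorm t ht0.le htσ L))
      have hp2 : p ≤ Λ / ((N:ℝ) - 1) := (div_le_div_iff_of_pos_right hNR).mpr (hψΛ _ _)
      have hΓ' : 0 ≤ Γ / ((N:ℝ) - 1) := div_nonneg hΓ0 hNR.le
      have hFL2 := hxLb t ht0.le htσ
      have hFLM := hFb L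
      have hFiM := hFb i
      have e0 : p * (⟪x L t, v⟫ - ⟪x i t, v⟫)
          = p * (⟪x L t, v⟫ - M₀) + p * (M₀ - ⟪x i t, v⟫) := by ring
      have e1 : p * (⟪x L t, v⟫ - M₀) ≤ (Γ / ((N:ℝ) - 1)) * (⟪x L t, v⟫ - M₀) :=
        mul_le_mul_of_nonpos_right hp1 (by linarith)
      have e2 : (Γ / ((N:ℝ) - 1)) * (⟪x L t, v⟫ - M₀)
          ≤ (Γ / ((N:ℝ) - 1)) * ((m₀ - M₀) / 2) :=
        mul_le_mul_of_nonneg_left (by linarith) hΓ'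
      have e3 : p * (M₀ - ⟪x i t, v⟫) ≤ (Λ / ((N:ℝ) - 1)) * (M₀ - ⟪x i t, v⟫) :=
        mul_le_mul_of_nonneg_right hp2 (by linarith)
      linarith
    have hfin : (Λ / ((N:ℝ) - 1)) * (M₀ - ⟪x i t, v⟫) + (Γ / ((N:ℝ) - 1)) * ((m₀ - M₀) / 2)
        + ((N:ℝ) - 2) * ((Λ / ((N:ℝ) - 1)) * (M₀ - ⟪x i t, v⟫))
        = Λ * (M₀ - ⟪x i t, v⟫) - c := by
      rw [hc]
      field_simp
      ring
    linarith
  -- the final estimate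
  intro i hi hiL
  have hdiff2 : ∀ t ∈ Ioo 0 σ,
      HasDerivAt (fun t => Real.exp (Λ * t) * (⟪x i t, v⟫ - M₀) + c / Λ * Real.exp (Λ * t))
        ((Λ * Real.exp (Λ * t) * (⟪x i t, v⟫ - M₀) + Real.exp (Λ * t) *
          ⟪∑ j ∈ Finset.univ.erase i,
            (ψ (x i t) (x j t) / ((N:ℝ) - 1)) • (x j t - x i t), v⟫)
          + c / Λ * (Λ * Real.exp (Λ * t))) t := by
    intro t ht
    have he : HasDerivAt (fun t => Real.exp (Λ * t)) (Λ * Real.exp (Λ * t)) t := by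
      simpa [mul_comm] using ((hasDerivAt_id t).const_mul Λ).exp
    have hp : HasDerivAt (fun s => ⟪x i s, v⟫ - M₀)
        ⟪∑ j ∈ Finset.univ.erase i,
          (ψ (x i t) (x j t) / ((N:ℝ) - 1)) • (x j t - x i t), v⟫ t :=
      (proj_hasDerivAt (hsol.odex_foll i hi t ht.1) v).sub_const M₀
    exact (he.mul hp).add (he.const_mul (c / Λ))
  have hanti2 : AntitoneOn
      (fun t => Real.exp (Λ * t) * (⟪x i t, v⟫ - M₀) + c / Λ * Real.exp (Λ * t))
      (Icc 0 σ) := by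
    apply antitoneOn_of_deriv_nonpos (convex_Icc 0 σ)
    · exact (((Real.continuous_exp.comp (continuous_const.mul continuous_id)).mul
        (((hsol.contx i).inner continuous_const).sub continuous_const)).add
        (continuous_const.mul (Real.continuous_exp.comp
          (continuous_const.mul continuous_id)))).continuousOn
    · rw [interior_Icc]
      exact fun t ht => ((hdiff2 t ht).differentiableAt).differentiableWithinAt
    · rw [interior_Icc]
      intro t ht
      rw [(hdiff2 t ht).deriv]
      have hs := sumbound2 i hi hiL t ht.1 ht.2.le
      have hcc : c / Λ * Λ = c := div_mul_cancel₀ c hΛpos.ne'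
      nlinarith [mul_le_mul_of_nonneg_left hs (Real.exp_pos (Λ * t)).le,
        Real.exp_pos (Λ * t), mul_le_mul_of_nonneg_right (le_of_eq hcc)
          (Real.exp_pos (Λ * t)).le]
  have h1 := hanti2 (Set.left_mem_Icc.mpr hσ0) (Set.right_mem_Icc.mpr hσ0) hσ0
  simp only [mul_zero, Real.exp_zero, one_mul, mul_one] at h1
  have hF0 : ⟪x i 0, v⟫ ≤ M₀ := hMxf i hi
  have hEE : Real.exp (-(Λ * σ)) * Real.exp (Λ * σ) = 1 := by
    rw [← Real.exp_add]; simp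
  have h2 := mul_le_mul_of_nonneg_left h1 (Real.exp_nonneg (-(Λ * σ)))
  have h3 : Real.exp (-(Λ * σ)) * (Real.exp (Λ * σ) * (⟪x i σ, v⟫ - M₀)
      + c / Λ * Real.exp (Λ * σ)) = (⟪x i σ, v⟫ - M₀) + c / Λ := by
    have hr : Real.exp (-(Λ * σ)) * (Real.exp (Λ * σ) * (⟪x i σ, v⟫ - M₀)
        + c / Λ * Real.exp (Λ * σ))
        = (Real.exp (-(Λ * σ)) * Real.exp (Λ * σ)) * ((⟪x i σ, v⟫ - M₀) + c / Λ) := by ring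
    rw [hr, hEE, one_mul]
  rw [h3] at h2
  have hcΛ : 0 ≤ c / Λ := div_nonneg hc0 hΛpos.le
  have h4 : Real.exp (-(Λ * σ)) * ((⟪x i 0, v⟫ - M₀) + c / Λ)
      ≤ Real.exp (-(Λ * σ)) * (c / Λ) :=
    mul_le_mul_of_nonneg_left (by linarith) (Real.exp_nonneg _)
  have h5 : ⟪x i σ, v⟫ ≤ M₀ - c / Λ * (1 - Real.exp (-(Λ * σ))) := by nlinarith
  have hM₀ne : M₀ ≠ 0 := hM₀pos.ne'
  have hΛne : Λ ≠ 0 := hΛpos.ne'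
  have hNne : (N:ℝ) - 1 ≠ 0 := hNR.ne'
  have heq : (1 - δ₁) * M₀ = M₀ - c / Λ * (1 - Real.exp (-(Λ * σ))) := by
    rw [hδ₁, hc]
    field_simp
  linarith [heq.ge]
end
end
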